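/- If n is odd, the map μ : R[x]/⟨xⁿ-1⟩ → R[x]/⟨xⁿ-(1-2u²)⟩ induced by c(x) ↦ c((1-2u²)x) is a well-defined ring isomorphism. -/

import Mathlib

open Polynomial

/-!
The substitution `X ↦ λX` is an automorphism of `R[X]` because `λ` is a unit (indeed `λ² = 1`,
as `u³ = u`). It sends `Xⁿ - 1` to `λⁿXⁿ - 1 = λ(Xⁿ - λ)` when `n` is odd, so it maps the ideal
`⟨Xⁿ - 1⟩` onto `⟨Xⁿ - λ⟩` and descends to an isomorphism of the quotients.
-/

abbrev Rp (p : ℕ) := AdjoinRoot (X ^ 3 - X : (ZMod p)[X])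
noncomputable def uu (p : ℕ) : Rp p := AdjoinRoot.root _
noncomputable def lam (p : ℕ) : Rp p := 1 - 2 * uu p ^ 2

namespace Polynomial

variable {R : Type*} [CommRing R]

noncomputable def scaleX (a : Rˣ) : R[X] ≃ₐ[R] R[X] :=
  algEquivOfCompEqX (C (a : R) * X) (C (↑a⁻¹ : R) * X)
    (by simp [← mul_assoc, ← C_mul]) (by simp [← mul_assoc, ← C_mul])

theorem scaleX_apply (a : Rˣ) (f : R[X]) : scaleX a f = f.comp (C (a : R) * X) :=
  (comp_eq_aeval).symm

theorem map_scaleX_span_X_pow_sub_C (a : Rˣ) {n : ℕ} {b c : R} (h : (a : R) ^ n * c = b) :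
    (Ideal.span {X ^ n - C b}).map (scaleX a) = Ideal.span {X ^ n - C c} := by
  have hmap : scaleX a (X ^ n - C b) = C ((a : R) ^ n) * (X ^ n - C c) := by
    rw [scaleX_apply, sub_comp, X_pow_comp, C_comp, mul_pow, ← C_pow, ← h, C_mul]
    ring
  rw [Ideal.map_span, Set.image_singleton, hmap,
    Ideal.span_singleton_mul_left_unit ((a.isUnit.pow n).map C)]

theorem exists_quotient_span_X_pow_sub_C_equiv (a : Rˣ) {n : ℕ} {b c : R}
    (h : (a : R) ^ n * c = b) :
    ∃ e : (R[X] ⧸ Ideal.span {X ^ n - C b}) ≃+* (R[X] ⧸ Ideal.span {X ^ n - C c}),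
      ∀ f : R[X], e (Ideal.Quotient.mk _ f) = Ideal.Quotient.mk _ (f.comp (C (a : R) * X)) :=
  ⟨Ideal.quotientEquiv _ _ (scaleX a).toRingEquiv (map_scaleX_span_X_pow_sub_C a h).symm,
    fun f => congrArg (Ideal.Quotient.mk _) (scaleX_apply a f)⟩

end Polynomial

theorem uu_pow_three (p : ℕ) : uu p ^ 3 = uu p := by
  have h := AdjoinRoot.eval₂_root (X ^ 3 - X : (ZMod p)[X])
  rwa [eval₂_sub, eval₂_pow, eval₂_X, sub_eq_zero] at h

theorem lam_sq (p : ℕ) : lam p ^ 2 = 1 := by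
  unfold lam
  linear_combination (4 * uu p) * uu_pow_three p

theorem mu_ring_iso_general (p n : ℕ) (hn : Odd n) :
    ∃ e : ((Rp p)[X] ⧸ Ideal.span {(X : (Rp p)[X]) ^ n - 1}) ≃+*
          ((Rp p)[X] ⧸ Ideal.span {(X : (Rp p)[X]) ^ n - C (lam p)}),
      ∀ f : (Rp p)[X],
        e (Ideal.Quotient.mk _ f) = Ideal.Quotient.mk _ (f.comp (C (lam p) * X)) := by
  let lamUnit : (Rp p)ˣ := Units.mkOfMulEqOne (lam p) (lam p) (by rw [← sq, lam_sq])
  have hlam : lam p ^ n * lam p = 1 := by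
    obtain ⟨k, rfl⟩ := hn
    rw [← pow_succ, show 2 * k + 1 + 1 = 2 * (k + 1) by ring, pow_mul, lam_sq, one_pow]
  rw [← (C_1 : C (1 : Rp p) = 1)]
  exact exists_quotient_span_X_pow_sub_C_equiv lamUnit hlam

theorem mu_ring_iso (p n : ℕ) [Fact p.Prime] (hp : p ≠ 2) (hn : Odd n) :
    ∃ e : ((Rp p)[X] ⧸ Ideal.span {(X : (Rp p)[X]) ^ n - 1}) ≃+*
          ((Rp p)[X] ⧸ Ideal.span {(X : (Rp p)[X]) ^ n - C (lam p)}),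
      ∀ f : (Rp p)[X],
        e (Ideal.Quotient.mk _ f) = Ideal.Quotient.mk _ (f.comp (C (lam p) * X)) :=
  mu_ring_iso_general p n hn
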